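/- arXiv:2009.13749 — 3 statements merged into one kernel-verified Lean document; each statement's English description precedes it below -/
import Mathlib

section
/- Assume W ⪰ σ²I with σ > 0, let ν > 0 and κ = √ν/σ, and let {Σ_t}_{t=1}^T be a sequence of matrices in the SDP feasible set S such that ‖Σ_{t+1} − Σ_t‖ ≤ η for all t, with η ≤ σ²/κ². For each t set K_t = (Σ_t)_{xu}ᵀ (Σ_t)_{xx}⁻¹, V_t = (Σ_t)_{uu} − K_t (Σ_t)_{xx} K_tᵀ, and X_t = (Σ_t)_{xx}. Let X̂_1 be any symmetric positive semidefinite matrix and define X̂_{t+1} = (A + BK_t) X̂_t (A + BK_t)ᵀ + B V_t Bᵀ + W. Then for every t, ‖X̂_{t+1} − X_{t+1}‖ ≤ κ² e^{−t/(2κ²)} ‖X̂_1 − X_1‖ + 4ηκ⁴, where ‖·‖ is the spectral norm. -/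
/-!
Write `X_t = (Σ_t)_xx`, `M_t = A + B K_t` and `E_t = X̂_t - X_t`. Feasibility gives
`σ² ⪯ W ⪯ X_t ⪯ tr Σ_t ≤ ν`, so `X_t` is invertible and a Schur-complement computation splits the
constraint as `X_t = M_t X_t M_tᵀ + B V_t Bᵀ + W` with `V_t ⪰ 0`; hence
`E_{t+1} = M_t E_t M_tᵀ - (X_{t+1} - X_t)`. With `ρ = ν / (ν + σ²)` we get
`M_t X_t M_tᵀ ⪯ X_t - σ² ⪯ ρ X_{t+1}`, the last step because `X_t ⪯ ν`, `X_t ⪯ X_{t+1} + η` and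
`ν η ≤ σ⁴` (which is `η ≤ σ²/κ²`); also `±(X_{t+1} - X_t) ⪯ η ⪯ (η/σ²) X_{t+1}`. So a bound
`-c X_t ⪯ E_t ⪯ c X_t` propagates in the Loewner order with `c ↦ ρ c + η/σ²`, and then
`‖E_t‖ ≤ ν c` because `‖E‖ ≤ r ↔ -r ⪯ E ⪯ r` for symmetric `E`. Finally
`ρ ≤ 1 - 1/(2κ²) ≤ exp (-1/(2κ²))` and `∑ ρⁱ ≤ 1 + κ² ≤ 2κ²`, using `κ ≥ 1`.
-/

open Matrix

/-- Spectral (ℓ₂ operator) norm of a real matrix. -/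
noncomputable def sNorm {m n : Type*} [Fintype m] [Fintype n] [DecidableEq n]
    (M : Matrix m n ℝ) : ℝ :=
  ‖LinearMap.toContinuousLinearMap (Matrix.toEuclideanLin M)‖

/-- Frobenius norm of a real matrix. -/
noncomputable def fNorm {m n : Type*} [Fintype m] [Fintype n] (M : Matrix m n ℝ) : ℝ :=
  Real.sqrt (Matrix.trace (Mᵀ * M))

/-- `K` is `(κ,γ)`-strongly stable for the pair `(A,B)`. -/
def StronglyStable {d k : ℕ} (A : Matrix (Fin d) (Fin d) ℝ) (B : Matrix (Fin d) (Fin k) ℝ)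
    (K : Matrix (Fin k) (Fin d) ℝ) (κ γ : ℝ) : Prop :=
  0 < κ ∧ 0 < γ ∧ γ ≤ 1 ∧ sNorm K ≤ κ ∧
    ∃ H L : Matrix (Fin d) (Fin d) ℝ, IsUnit H ∧ A + B * K = H * L * H⁻¹ ∧
      sNorm L ≤ 1 - γ ∧ sNorm H * sNorm H⁻¹ ≤ κ

/-- The feasible set of the SDP relaxation of LQ control. -/
def Feasible {d k : ℕ} (A : Matrix (Fin d) (Fin d) ℝ) (B : Matrix (Fin d) (Fin k) ℝ)
    (W : Matrix (Fin d) (Fin d) ℝ) (ν : ℝ)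
    (Sg : Matrix (Fin d ⊕ Fin k) (Fin d ⊕ Fin k) ℝ) : Prop :=
  Sg.PosSemidef ∧ Sg.trace ≤ ν ∧
    Sg.toBlocks₁₁ = fromCols A B * Sg * (fromCols A B)ᵀ + W

/-- The controller `K = Σ_{xu}ᵀ Σ_{xx}⁻¹` extracted from an SDP point. -/
noncomputable def extractK {d k : ℕ} (Sg : Matrix (Fin d ⊕ Fin k) (Fin d ⊕ Fin k) ℝ) :
    Matrix (Fin k) (Fin d) ℝ :=
  (Sg.toBlocks₁₂)ᵀ * (Sg.toBlocks₁₁)⁻¹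

/-- The exploration covariance `V = Σ_{uu} - K Σ_{xx} Kᵀ` extracted from an SDP point. -/
noncomputable def extractV {d k : ℕ} (Sg : Matrix (Fin d ⊕ Fin k) (Fin d ⊕ Fin k) ℝ) :
    Matrix (Fin k) (Fin k) ℝ :=
  Sg.toBlocks₂₂ - extractK Sg * Sg.toBlocks₁₁ * (extractK Sg)ᵀ

open Set
open scoped MatrixOrder Matrix.Norms.L2Operator

theorem sNorm_eq_norm {n : Type*} [Fintype n] [DecidableEq n] (M : Matrix n n ℝ) :
    sNorm M = ‖M‖ :=
  rfl

section CFC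

variable {𝔄 : Type*} [NormedRing 𝔄] [StarRing 𝔄] [NormedAlgebra ℝ 𝔄] [PartialOrder 𝔄]
  [StarOrderedRing 𝔄] [IsometricContinuousFunctionalCalculus ℝ 𝔄 IsSelfAdjoint]
  [NonnegSpectrumClass ℝ 𝔄]

theorem IsSelfAdjoint.norm_le_iff_mem_Icc {a : 𝔄} (ha : IsSelfAdjoint a) {r : ℝ} (hr : 0 ≤ r) :
    ‖a‖ ≤ r ↔ a ∈ Icc (-(r • 1)) (r • 1) := by
  rw [← Algebra.algebraMap_eq_smul_one, ← map_neg, mem_Icc, algebraMap_le_iff_le_spectrum ha,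
    le_algebraMap_iff_spectrum_le ha, ← forall₂_and]
  conv_lhs => rw [← cfc_id ℝ a, norm_cfc_le_iff id a hr]
  simp only [id, Real.norm_eq_abs, abs_le]

theorem norm_le_of_mem_Icc_smul [StarModule ℝ 𝔄] [PosSMulMono ℝ 𝔄] {a x : 𝔄} {c r : ℝ}
    (hc : 0 ≤ c) (hr : 0 ≤ r) (hx : x ≤ r • 1) (ha : a ∈ Icc (-(c • x)) (c • x)) :
    ‖a‖ ≤ c * r := by
  have hcx : c • x ≤ (c * r) • 1 := by
    rw [mul_smul]
    exact smul_le_smul_of_nonneg_left hx hc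
  have hsa : IsSelfAdjoint a := by
    have hcr : IsSelfAdjoint ((c * r) • (1 : 𝔄)) := .smul (.all _) (.one 𝔄)
    simpa using hcr.sub (IsSelfAdjoint.of_nonneg (sub_nonneg.2 (ha.2.trans hcx)))
  exact (hsa.norm_le_iff_mem_Icc (by positivity)).2 (Icc_subset_Icc (neg_le_neg hcx) hcx ha)

end CFC

section OrderedAlgebra

variable {𝔄 : Type*} [Ring 𝔄] [StarRing 𝔄] [PartialOrder 𝔄] [StarOrderedRing 𝔄] [Algebra ℝ 𝔄]
  [PosSMulMono ℝ 𝔄]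

theorem conj_sub_mem_Icc {E X X' M D : 𝔄} {c ρ β : ℝ} (hc : 0 ≤ c)
    (hE : E ∈ Icc (-(c • X)) (c • X)) (hM : M * X * star M ≤ ρ • X')
    (hD : D ∈ Icc (-(β • X')) (β • X')) :
    M * E * star M - D ∈ Icc (-((c * ρ + β) • X')) ((c * ρ + β) • X') := by
  have hcM : M * (c • X) * star M ≤ (c * ρ) • X' := by
    rw [mul_smul_comm, smul_mul_assoc, mul_smul]
    exact smul_le_smul_of_nonneg_left hM hc
  have hneg : M * (-(c • X)) * star M = -(M * (c • X) * star M) := by noncomm_ring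
  constructor
  · have hlo := star_right_conjugate_le_conjugate hE.1 M
    rw [add_smul, neg_add, sub_eq_add_neg]
    exact add_le_add (hneg ▸ hlo |>.trans' (neg_le_neg hcM)) (neg_le_neg hD.2)
  · have hhi := star_right_conjugate_le_conjugate hE.2 M
    rw [add_smul, sub_eq_add_neg]
    exact add_le_add (hhi.trans hcM) (neg_le.mp hD.1)

open Finset in
theorem mem_Icc_of_conj_recursion {X E M D : ℕ → 𝔄} {c ρ β : ℝ} (hc : 0 ≤ c) (hρ : 0 ≤ ρ)
    (hβ : 0 ≤ β) (hrec : ∀ n, E (n + 1) = M n * E n * star (M n) - D n)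
    (hM : ∀ n, M n * X n * star (M n) ≤ ρ • X (n + 1))
    (hD : ∀ n, D n ∈ Icc (-(β • X (n + 1))) (β • X (n + 1)))
    (h0 : E 0 ∈ Icc (-(c • X 0)) (c • X 0)) (n : ℕ) :
    E n ∈ Icc (-((ρ ^ n * c + β * ∑ i ∈ range n, ρ ^ i) • X n))
      ((ρ ^ n * c + β * ∑ i ∈ range n, ρ ^ i) • X n) := by
  induction n with
  | zero => simpa using h0
  | succ n ih =>
    have hcoeff : (ρ ^ n * c + β * ∑ i ∈ range n, ρ ^ i) * ρ + β
        = ρ ^ (n + 1) * c + β * ∑ i ∈ range (n + 1), ρ ^ i := by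
      rw [geom_sum_succ]
      ring
    rw [hrec, ← hcoeff]
    exact conj_sub_mem_Icc (by positivity) ih (hM n) (hD n)

theorem mem_Icc_div_smul_of_smul_le {a u X : 𝔄} {r s : ℝ} (hs : 0 < s)
    (hsX : s • u ≤ X) (ha : a ∈ Icc (-(r • u)) (r • u)) (hr : 0 ≤ r) :
    a ∈ Icc (-((r / s) • X)) ((r / s) • X) := by
  have hru : r • u ≤ (r / s) • X := by
    calc r • u = (r / s) • s • u := by rw [smul_smul, div_mul_cancel₀ _ hs.ne']
      _ ≤ (r / s) • X := smul_le_smul_of_nonneg_left hsX (by positivity)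
  exact Icc_subset_Icc (neg_le_neg hru) hru ha

end OrderedAlgebra

theorem sub_smul_le_div_smul {𝔄 : Type*} [AddCommGroup 𝔄] [PartialOrder 𝔄]
    [IsOrderedAddMonoid 𝔄] [Module ℝ 𝔄] [PosSMulMono ℝ 𝔄] {X X' u : 𝔄} {ν s η : ℝ}
    (hν : 0 < ν) (hs : 0 ≤ s) (hu : 0 ≤ u) (hX : X ≤ ν • u) (hXX' : X - X' ≤ η • u)
    (hη : η * ν ≤ s * s) :
    X - s • u ≤ (ν / (ν + s)) • X' := by
  have hνs : 0 < ν + s := by positivity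
  have key : (ν + s) • (X - s • u) ≤ ν • X' := by
    have hsplit : ν • X' - (ν + s) • (X - s • u)
        = ν • (η • u - (X - X')) + s • (ν • u - X) + (s * s - η * ν) • u := by module
    rw [← sub_nonneg, hsplit]
    refine add_nonneg (add_nonneg ?_ ?_) ?_
    · exact smul_nonneg hν.le (sub_nonneg.2 hXX')
    · exact smul_nonneg hs (sub_nonneg.2 hX)
    · exact smul_nonneg (sub_nonneg.2 hη) hu
  calc X - s • u = (ν + s)⁻¹ • (ν + s) • (X - s • u) := by rw [inv_smul_smul₀ hνs.ne']
    _ ≤ (ν + s)⁻¹ • ν • X' := smul_le_smul_of_nonneg_left key (by positivity)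
    _ = (ν / (ν + s)) • X' := by rw [smul_smul, div_eq_inv_mul]

namespace Matrix

theorem posDef_of_smul_one_le {n : Type*} [DecidableEq n] {X : Matrix n n ℝ} {s : ℝ}
    (hs : 0 < s) (h : s • 1 ≤ X) : X.PosDef := by
  simpa using (PosDef.one.smul hs).add_posSemidef (le_iff.1 h)

theorem le_of_smul_one_le_smul_one {n : Type*} [DecidableEq n] [Nonempty n] {a b : ℝ}
    (h : a • (1 : Matrix n n ℝ) ≤ b • 1) : a ≤ b := by
  simpa using (le_iff.1 h).diag_nonneg (i := Classical.arbitrary n)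

theorem PosSemidef.le_trace_smul_one {n : Type*} [Fintype n] [DecidableEq n]
    {X : Matrix n n ℝ} (hX : X.PosSemidef) : X ≤ X.trace • 1 := by
  rw [← Algebra.algebraMap_eq_smul_one, le_algebraMap_iff_spectrum_le hX.isHermitian,
    hX.isHermitian.spectrum_real_eq_range_eigenvalues, hX.isHermitian.trace_eq_sum_eigenvalues]
  rintro - ⟨i, rfl⟩
  simpa using Finset.single_le_sum (fun j _ ↦ hX.eigenvalues_nonneg j) (Finset.mem_univ i)

theorem PosSemidef.trace_toBlocks₁₁_le {m n : Type*} [Fintype m] [Fintype n]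
    {S : Matrix (m ⊕ n) (m ⊕ n) ℝ} (hS : S.PosSemidef) : S.toBlocks₁₁.trace ≤ S.trace := by
  have hsplit : S.trace = S.toBlocks₁₁.trace + S.toBlocks₂₂.trace := by
    simp [trace, Fintype.sum_sum_type, toBlocks₁₁, toBlocks₂₂]
  have h₂₂ : S.toBlocks₂₂.PosSemidef := hS.submatrix Sum.inr
  linarith [h₂₂.trace_nonneg]

theorem toBlocks₁₁_le_toBlocks₁₁ {m n : Type*} {S T : Matrix (m ⊕ n) (m ⊕ n) ℝ} (h : S ≤ T) :
    S.toBlocks₁₁ ≤ T.toBlocks₁₁ :=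
  le_iff.2 ((le_iff.1 h).submatrix Sum.inl)

theorem IsHermitian.toBlocks₁₁_mem_Icc {m n : Type*} [Fintype m] [Fintype n]
    [DecidableEq m] [DecidableEq n] {T : Matrix (m ⊕ n) (m ⊕ n) ℝ} (hT : T.IsHermitian) {r : ℝ}
    (h : ‖T‖ ≤ r) : T.toBlocks₁₁ ∈ Icc (-(r • 1)) (r • 1) := by
  obtain ⟨hlo, hhi⟩ := (IsSelfAdjoint.norm_le_iff_mem_Icc hT ((norm_nonneg T).trans h)).1 h
  rw [← fromBlocks_one, fromBlocks_smul] at hlo hhi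
  rw [fromBlocks_neg] at hlo
  exact ⟨toBlocks₁₁_le_toBlocks₁₁ hlo, toBlocks₁₁_le_toBlocks₁₁ hhi⟩

theorem fromCols_mul_mul_transpose_fromCols {R : Type*} [CommRing R] {l m n : Type*}
    [Fintype m] [Fintype n] (A : Matrix l m R) (B : Matrix l n R)
    {S : Matrix (m ⊕ n) (m ⊕ n) R} (hS : Sᵀ = S) {K : Matrix n m R}
    (hK : K * S.toBlocks₁₁ = S.toBlocks₂₁) :
    fromCols A B * S * (fromCols A B)ᵀ = (A + B * K) * S.toBlocks₁₁ * (A + B * K)ᵀ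
      + B * (S.toBlocks₂₂ - K * S.toBlocks₁₁ * Kᵀ) * Bᵀ := by
  have h₁₁ : S.toBlocks₁₁ᵀ = S.toBlocks₁₁ := by
    conv_rhs => rw [← hS]
    rfl
  have h₁₂ : S.toBlocks₁₂ = S.toBlocks₁₁ * Kᵀ := by
    conv_lhs => rw [← hS]
    rw [← h₁₁, ← transpose_mul, hK]
    rfl
  rw [← fromBlocks_toBlocks S, h₁₂, ← hK, fromCols_mul_fromBlocks, transpose_fromCols,
    fromCols_mul_fromRows]
  simp only [toBlocks_fromBlocks₁₁, toBlocks_fromBlocks₂₂, transpose_add, transpose_mul,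
    Matrix.mul_add, Matrix.add_mul, Matrix.mul_sub, Matrix.sub_mul, Matrix.mul_assoc]
  abel

end Matrix

section Extract

variable {d k : ℕ} {S : Matrix (Fin d ⊕ Fin k) (Fin d ⊕ Fin k) ℝ}

theorem extractK_mul_toBlocks₁₁ (hS : Sᵀ = S) (hX : IsUnit S.toBlocks₁₁.det) :
    extractK S * S.toBlocks₁₁ = S.toBlocks₂₁ := by
  rw [extractK, Matrix.mul_assoc, nonsing_inv_mul _ hX, Matrix.mul_one]
  conv_rhs => rw [← hS]
  rfl

theorem posSemidef_extractV (hS : S.PosSemidef) (hX : S.toBlocks₁₁.PosDef) :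
    (extractV S).PosSemidef := by
  have : Invertible S.toBlocks₁₁ := hX.isUnit.invertible
  have hSsymm : Sᵀ = S := hS.isHermitian.eq
  have h₂₁ : S.toBlocks₂₁ = S.toBlocks₁₂ᴴ := by
    conv_lhs => rw [← hS.isHermitian.eq]
    rfl
  have hschur : extractV S = S.toBlocks₂₂ - S.toBlocks₁₂ᴴ * S.toBlocks₁₁⁻¹ * S.toBlocks₁₂ := by
    rw [extractV, extractK_mul_toBlocks₁₁ hSsymm (isUnit_det_of_invertible _), extractK,
      transpose_mul, transpose_nonsing_inv, transpose_transpose, h₂₁,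
      ← conjTranspose_eq_transpose_of_trivial S.toBlocks₁₁, hX.isHermitian.eq, Matrix.mul_assoc]
  rw [hschur, ← PosDef.fromBlocks₁₁ _ _ hX, ← h₂₁, fromBlocks_toBlocks]
  exact hS

end Extract

section Feasible

variable {d k : ℕ} {A : Matrix (Fin d) (Fin d) ℝ} {B : Matrix (Fin d) (Fin k) ℝ}
  {W : Matrix (Fin d) (Fin d) ℝ} {ν σ η : ℝ} {S S' : Matrix (Fin d ⊕ Fin k) (Fin d ⊕ Fin k) ℝ}

theorem Feasible.le_toBlocks₁₁ (hS : Feasible A B W ν S) : W ≤ S.toBlocks₁₁ := by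
  rw [hS.2.2, le_iff, add_sub_cancel_right, ← conjTranspose_eq_transpose_of_trivial]
  exact hS.1.mul_mul_conjTranspose_same _

theorem Feasible.toBlocks₁₁_le (hS : Feasible A B W ν S) : S.toBlocks₁₁ ≤ ν • 1 :=
  (hS.1.submatrix Sum.inl).le_trace_smul_one.trans <|
    smul_le_smul_of_nonneg_right (hS.1.trace_toBlocks₁₁_le.trans hS.2.1) zero_le_one

theorem Feasible.toBlocks₁₁_eq (hS : Feasible A B W ν S) (hX : S.toBlocks₁₁.PosDef) :
    S.toBlocks₁₁ = (A + B * extractK S) * S.toBlocks₁₁ * (A + B * extractK S)ᵀ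
      + B * extractV S * Bᵀ + W := by
  have hSsymm : Sᵀ = S := hS.1.isHermitian.eq
  conv_lhs => rw [hS.2.2, fromCols_mul_mul_transpose_fromCols A B hSsymm
    (extractK_mul_toBlocks₁₁ hSsymm ((isUnit_iff_isUnit_det _).1 hX.isUnit))]
  rfl

theorem Feasible.closedLoop_conj_le (hS : Feasible A B W ν S) (hX : S.toBlocks₁₁.PosDef) :
    (A + B * extractK S) * S.toBlocks₁₁ * (A + B * extractK S)ᵀ ≤ S.toBlocks₁₁ - W := by
  nth_rw 2 [hS.toBlocks₁₁_eq hX]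
  rw [le_iff, add_sub_cancel_right, add_sub_cancel_left, ← conjTranspose_eq_transpose_of_trivial]
  exact (posSemidef_extractV hS.1 hX).mul_mul_conjTranspose_same B

theorem Feasible.sub_toBlocks₁₁_eq_conj_sub (hS : Feasible A B W ν S)
    (hX : S.toBlocks₁₁.PosDef) {Y Y' : Matrix (Fin d) (Fin d) ℝ}
    (hY : Y' = (A + B * extractK S) * Y * (A + B * extractK S)ᵀ + B * extractV S * Bᵀ + W)
    (S' : Matrix (Fin d ⊕ Fin k) (Fin d ⊕ Fin k) ℝ) :
    Y' - S'.toBlocks₁₁ = (A + B * extractK S) * (Y - S.toBlocks₁₁) * (A + B * extractK S)ᵀ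
      - (S'.toBlocks₁₁ - S.toBlocks₁₁) := by
  have hnoise := eq_sub_of_add_eq' ((add_assoc _ _ _).symm.trans (hS.toBlocks₁₁_eq hX).symm)
  rw [hY, add_assoc, hnoise, Matrix.mul_sub, Matrix.sub_mul]
  abel

theorem Feasible.toBlocks₁₁_sub_mem_Icc (hS : Feasible A B W ν S) (hS' : Feasible A B W ν S')
    (h : sNorm (S' - S) ≤ η) :
    S'.toBlocks₁₁ - S.toBlocks₁₁ ∈ Icc (-(η • 1)) (η • 1) :=
  (hS'.1.isHermitian.sub hS.1.isHermitian).toBlocks₁₁_mem_Icc h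

theorem Feasible.closedLoop_conj_le_smul (hS : Feasible A B W ν S) (hS' : Feasible A B W ν S')
    (hσ : 0 < σ) (hν : 0 < ν) (hW : σ ^ 2 • 1 ≤ W) (hη : η * ν ≤ σ ^ 2 * σ ^ 2)
    (h : sNorm (S' - S) ≤ η) :
    (A + B * extractK S) * S.toBlocks₁₁ * (A + B * extractK S)ᵀ
      ≤ (ν / (ν + σ ^ 2)) • S'.toBlocks₁₁ := by
  have hX := posDef_of_smul_one_le (by positivity) (hW.trans hS.le_toBlocks₁₁)
  refine (hS.closedLoop_conj_le hX).trans ((sub_le_sub_left hW _).trans ?_)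
  refine sub_smul_le_div_smul hν (by positivity) zero_le_one hS.toBlocks₁₁_le ?_ hη
  simpa [neg_le_sub_iff_le_add, add_comm] using (hS.toBlocks₁₁_sub_mem_Icc hS' h).1

theorem norm_sub_toBlocks₁₁_le {Sg : ℕ → Matrix (Fin d ⊕ Fin k) (Fin d ⊕ Fin k) ℝ}
    {Xh : ℕ → Matrix (Fin d) (Fin d) ℝ}
    (hσ : 0 < σ) (hν : 0 < ν) (hW : σ ^ 2 • 1 ≤ W) (hη : η * ν ≤ σ ^ 2 * σ ^ 2)
    (hfeas : ∀ n, Feasible A B W ν (Sg n)) (hvar : ∀ n, sNorm (Sg (n + 1) - Sg n) ≤ η)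
    (hXh₀ : (Xh 0).PosSemidef)
    (hrec : ∀ n, Xh (n + 1) = (A + B * extractK (Sg n)) * Xh n * (A + B * extractK (Sg n))ᵀ
      + B * extractV (Sg n) * Bᵀ + W) (n : ℕ) :
    ‖Xh n - (Sg n).toBlocks₁₁‖ ≤ ((ν / (ν + σ ^ 2)) ^ n * (‖Xh 0 - (Sg 0).toBlocks₁₁‖ / σ ^ 2)
      + η / σ ^ 2 * ∑ i ∈ Finset.range n, (ν / (ν + σ ^ 2)) ^ i) * ν := by
  have hη₀ : 0 ≤ η := (norm_nonneg _).trans (hvar 0)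
  have hσX (n : ℕ) : σ ^ 2 • 1 ≤ (Sg n).toBlocks₁₁ := hW.trans (hfeas n).le_toBlocks₁₁
  have hX (n : ℕ) : (Sg n).toBlocks₁₁.PosDef := posDef_of_smul_one_le (by positivity) (hσX n)
  have hE₀ := (IsSelfAdjoint.norm_le_iff_mem_Icc (hXh₀.isHermitian.sub (hX 0).isHermitian)
    (norm_nonneg _)).1 le_rfl
  refine norm_le_of_mem_Icc_smul (by positivity) hν.le (hfeas n).toBlocks₁₁_le ?_
  refine mem_Icc_of_conj_recursion (E := fun n ↦ Xh n - (Sg n).toBlocks₁₁)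
    (D := fun n ↦ (Sg (n + 1)).toBlocks₁₁ - (Sg n).toBlocks₁₁)
    (c := ‖Xh 0 - (Sg 0).toBlocks₁₁‖ / σ ^ 2) (ρ := ν / (ν + σ ^ 2)) (β := η / σ ^ 2)
    (by positivity) (by positivity) (by positivity)
    (fun n ↦ (hfeas n).sub_toBlocks₁₁_eq_conj_sub (hX n) (hrec n) _)
    (fun n ↦ (hfeas n).closedLoop_conj_le_smul (hfeas (n + 1)) hσ hν hW hη (hvar n))
    (fun n ↦ mem_Icc_div_smul_of_smul_le (by positivity) (hσX (n + 1))
      ((hfeas n).toBlocks₁₁_sub_mem_Icc (hfeas (n + 1)) (hvar n)) hη₀)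
    (mem_Icc_div_smul_of_smul_le (by positivity) (hσX 0) hE₀ (norm_nonneg _)) n

end Feasible

theorem pow_div_add_le_exp {ν s : ℝ} (hs : 0 < s) (hsν : s ≤ ν) (t : ℕ) :
    (ν / (ν + s)) ^ t ≤ Real.exp (-(t / (2 * (ν / s)))) := by
  have hν : 0 < ν := hs.trans_le hsν
  have hbase : ν / (ν + s) ≤ Real.exp (-(s / (2 * ν))) := by
    calc ν / (ν + s) ≤ 1 - s / (2 * ν) := by
          rw [div_le_iff₀ (by positivity)]
          field_simp
          nlinarith
      _ ≤ Real.exp (-(s / (2 * ν))) := by linarith [Real.add_one_le_exp (-(s / (2 * ν)))]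
  calc (ν / (ν + s)) ^ t ≤ Real.exp (-(s / (2 * ν))) ^ t :=
        pow_le_pow_left₀ (by positivity) hbase t
    _ = Real.exp (-(t / (2 * (ν / s)))) := by
        rw [← Real.exp_nat_mul]
        congr 1
        field_simp

theorem geom_sum_div_add_le {ν s : ℝ} (hs : 0 < s) (hν : 0 ≤ ν) (t : ℕ) :
    ∑ i ∈ Finset.range t, (ν / (ν + s)) ^ i ≤ (ν + s) / s := by
  have hνs : 0 < ν + s := by positivity
  have h := geom_sum_Ico_le_of_lt_one (x := ν / (ν + s)) (m := 0) (n := t) (by positivity)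
    ((div_lt_one hνs).2 (by linarith))
  rwa [← Finset.range_eq_Ico, pow_zero, one_sub_div hνs.ne', add_sub_cancel_left,
    one_div_div] at h

theorem error_coeff_mul_le {ν s η e : ℝ} (hs : 0 < s) (hsν : s ≤ ν) (hη : 0 ≤ η) (he : 0 ≤ e)
    (t : ℕ) :
    ((ν / (ν + s)) ^ t * (e / s) + η / s * ∑ i ∈ Finset.range t, (ν / (ν + s)) ^ i) * ν
      ≤ ν / s * Real.exp (-(t / (2 * (ν / s)))) * e + 4 * η * (ν / s) ^ 2 := by
  have hν : 0 < ν := hs.trans_le hsν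
  have hdecay :
      (ν / (ν + s)) ^ t * (e / s) * ν ≤ ν / s * Real.exp (-(t / (2 * (ν / s)))) * e := by
    calc (ν / (ν + s)) ^ t * (e / s) * ν = ν / s * (ν / (ν + s)) ^ t * e := by ring
      _ ≤ _ := by gcongr; exact pow_div_add_le_exp hs hsν t
  have hdrift :
      η / s * (∑ i ∈ Finset.range t, (ν / (ν + s)) ^ i) * ν ≤ 4 * η * (ν / s) ^ 2 := by
    calc η / s * (∑ i ∈ Finset.range t, (ν / (ν + s)) ^ i) * ν
        ≤ η / s * ((ν + s) / s) * ν := by gcongr; exact geom_sum_div_add_le hs hν.le t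
      _ ≤ 4 * η * (ν / s) ^ 2 := by
          field_simp
          nlinarith [mul_le_mul_of_nonneg_left hsν hη]
  linarith

theorem stmt2_general {d k : ℕ} (A : Matrix (Fin d) (Fin d) ℝ) (B : Matrix (Fin d) (Fin k) ℝ)
    (W : Matrix (Fin d) (Fin d) ℝ) (ν σ η κ : ℝ) (hσ : 0 < σ) (hν : 0 < ν)
    (hW : (W - σ ^ 2 • (1 : Matrix (Fin d) (Fin d) ℝ)).PosSemidef)
    (hκ : κ = Real.sqrt ν / σ)
    (Sg : ℕ → Matrix (Fin d ⊕ Fin k) (Fin d ⊕ Fin k) ℝ)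
    (hfeas : ∀ t, 1 ≤ t → Feasible A B W ν (Sg t))
    (hvar : ∀ t, 1 ≤ t → sNorm (Sg (t + 1) - Sg t) ≤ η)
    (hηκ : η ≤ σ ^ 2 / κ ^ 2)
    (Xh : ℕ → Matrix (Fin d) (Fin d) ℝ) (hXh1 : (Xh 1).PosSemidef)
    (hrec : ∀ t, 1 ≤ t → Xh (t + 1) =
      (A + B * extractK (Sg t)) * Xh t * (A + B * extractK (Sg t))ᵀ
        + B * extractV (Sg t) * Bᵀ + W)
    (t : ℕ) :
    sNorm (Xh (t + 1) - (Sg (t + 1)).toBlocks₁₁) ≤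
      κ ^ 2 * Real.exp (-((t : ℝ) / (2 * κ ^ 2))) * sNorm (Xh 1 - (Sg 1).toBlocks₁₁)
        + 4 * η * κ ^ 4 := by
  have hη : 0 ≤ η := (norm_nonneg _).trans (hvar 1 le_rfl)
  simp only [sNorm_eq_norm]
  obtain hd | hd := isEmpty_or_nonempty (Fin d)
  · rw [Subsingleton.elim (Xh (t + 1) - _) 0, norm_zero]
    positivity
  have hW' : σ ^ 2 • (1 : Matrix (Fin d) (Fin d) ℝ) ≤ W := hW
  have hσν : σ ^ 2 ≤ ν := le_of_smul_one_le_smul_one <|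
    (hW'.trans (hfeas 1 le_rfl).le_toBlocks₁₁).trans (hfeas 1 le_rfl).toBlocks₁₁_le
  have hκ2 : κ ^ 2 = ν / σ ^ 2 := by rw [hκ, div_pow, Real.sq_sqrt hν.le]
  have hην : η * ν ≤ σ ^ 2 * σ ^ 2 := by
    rwa [hκ2, div_div_eq_mul_div, le_div_iff₀ hν] at hηκ
  have hbound := norm_sub_toBlocks₁₁_le (Sg := fun n ↦ Sg (n + 1)) (Xh := fun n ↦ Xh (n + 1))
    hσ hν hW' hην (fun n ↦ hfeas _ n.succ_pos) (fun n ↦ hvar _ n.succ_pos) hXh1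
    (fun n ↦ hrec _ n.succ_pos) t
  rw [show κ ^ 4 = (κ ^ 2) ^ 2 by ring, hκ2]
  exact hbound.trans (error_coeff_mul_le (by positivity) hσν hη (norm_nonneg _) t)

/-- fast covariance convergence along a slowly varying sequence of
feasible SDP solutions (Lemma 4.4 + covariance bound of Cohen et al.). -/
theorem stmt2 {d k : ℕ} (A : Matrix (Fin d) (Fin d) ℝ) (B : Matrix (Fin d) (Fin k) ℝ)
    (W : Matrix (Fin d) (Fin d) ℝ) (ν σ η κ : ℝ) (hσ : 0 < σ) (hν : 0 < ν)
    (hW : (W - σ ^ 2 • (1 : Matrix (Fin d) (Fin d) ℝ)).PosSemidef)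
    (hκ : κ = Real.sqrt ν / σ)
    (Sg : ℕ → Matrix (Fin d ⊕ Fin k) (Fin d ⊕ Fin k) ℝ)
    (hfeas : ∀ t, 1 ≤ t → Feasible A B W ν (Sg t))
    (hvar : ∀ t, 1 ≤ t → sNorm (Sg (t + 1) - Sg t) ≤ η)
    (hηκ : η ≤ σ ^ 2 / κ ^ 2)
    (Xh : ℕ → Matrix (Fin d) (Fin d) ℝ) (hXh1 : (Xh 1).PosSemidef)
    (hrec : ∀ t, 1 ≤ t → Xh (t + 1) =
      (A + B * extractK (Sg t)) * Xh t * (A + B * extractK (Sg t))ᵀ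
        + B * extractV (Sg t) * Bᵀ + W)
    (t : ℕ) (ht : 1 ≤ t) :
    sNorm (Xh (t + 1) - (Sg (t + 1)).toBlocks₁₁) ≤
      κ ^ 2 * Real.exp (-((t : ℝ) / (2 * κ ^ 2))) * sNorm (Xh 1 - (Sg 1).toBlocks₁₁)
        + 4 * η * κ ^ 4 :=
  stmt2_general A B W ν σ η κ hσ hν hW hκ Sg hfeas hvar hηκ Xh hXh1 hrec t
end

section
/- Let K ∈ ℝ^{k×d} be (κ,γ)-strongly stable for (A,B) with κ ≥ 1, let M = A + BK, and let W ∈ ℝ^{d×d} be symmetric positive semidefinite with Tr(W) ≤ λ². Then the series X = Σ_{t=0}^∞ M^t W (Mᵀ)^t converges, X is the steady-state covariance (X = M X Mᵀ + W), and Tr(X) + Tr(K X Kᵀ) ≤ 2κ⁴λ²/γ. -/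
/-! Writing `M = H L H⁻¹` gives `‖Mᵗ‖ ≤ ‖H‖‖H⁻¹‖‖L‖ᵗ ≤ κ(1-γ)ᵗ`, so the terms of the series decay
geometrically with ratio `(1-γ)²` and the series converges; shifting its index by one gives
`X = M X Mᵀ + W`. Decomposing `W = Σ vᵢvᵢᵀ` shows `Tr(N W Nᵀ) = Σ ‖N vᵢ‖² ≤ ‖N‖² Tr W`, hence
`Tr X + Tr(K X Kᵀ) ≤ (1 + κ²) κ² λ² / (1 - (1-γ)²) ≤ 2κ⁴λ²/γ`, using `κ ≥ 1` and
`1 - (1-γ)² = γ(2-γ) ≥ γ`. -/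

open Matrix

theorem Units.norm_conj_pow_le {R : Type*} [NormedRing R] (u : Rˣ) (x : R) (t : ℕ) :
    ‖((u : R) * x * ↑u⁻¹) ^ t‖ ≤ ‖(u : R)‖ * ‖(↑u⁻¹ : R)‖ * ‖x‖ ^ t := by
  cases t with
  | zero => simpa using norm_mul_le (u : R) ↑u⁻¹
  | succ t =>
    rw [u.conj_pow]
    calc ‖(u : R) * x ^ (t + 1) * ↑u⁻¹‖ ≤ ‖(u : R)‖ * ‖x ^ (t + 1)‖ * ‖(↑u⁻¹ : R)‖ :=
          norm_mul₃_le
      _ ≤ ‖(u : R)‖ * ‖x‖ ^ (t + 1) * ‖(↑u⁻¹ : R)‖ := by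
          gcongr; exact norm_pow_le' x t.succ_pos
      _ = ‖(u : R)‖ * ‖(↑u⁻¹ : R)‖ * ‖x‖ ^ (t + 1) := mul_right_comm _ _ _

section Series

variable {m n ι R : Type*} [Fintype n] [TopologicalSpace R]

theorem HasSum.matrix_mul_mul_transpose [CommSemiring R] [IsTopologicalSemiring R]
    {f : ι → Matrix n n R} {X : Matrix n n R} (hf : HasSum f X) (P : Matrix m n R) :
    HasSum (fun i => P * f i * Pᵀ) (P * X * Pᵀ) := by
  have hP : Continuous fun Y : Matrix n n R => P * Y * Pᵀ :=
    (continuous_const.matrix_mul continuous_id).matrix_mul continuous_const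
  exact hf.map (G := Matrix n n R →+ Matrix m m R)
    { toFun Y := P * Y * Pᵀ
      map_zero' := by simp
      map_add' Y Z := by simp only [Matrix.mul_add, Matrix.add_mul] } hP

theorem HasSum.matrix_trace [AddCommMonoid R] [ContinuousAdd R]
    {f : ι → Matrix n n R} {X : Matrix n n R} (hf : HasSum f X) :
    HasSum (fun i => (f i).trace) X.trace :=
  hf.map (traceAddMonoidHom n R) continuous_id.matrix_trace

theorem Matrix.eq_mul_mul_transpose_add_of_hasSum [DecidableEq n] [CommRing R]
    [IsTopologicalRing R] [T2Space R] {M W X : Matrix n n R}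
    (hX : HasSum (fun t : ℕ => M ^ t * W * Mᵀ ^ t) X) :
    X = M * X * Mᵀ + W := by
  have hshift : HasSum (fun t : ℕ => M ^ (t + 1) * W * Mᵀ ^ (t + 1)) (M * X * Mᵀ) := by
    convert hX.matrix_mul_mul_transpose M using 2 with t
    rw [pow_succ' M, pow_succ Mᵀ]
    simp only [Matrix.mul_assoc]
  have := hshift.unique ((hasSum_nat_add_iff' 1).mpr hX)
  simp [this]

end Series

theorem Matrix.trace_vecMulVec_self {p : Type*} [Fintype p] (u : p → ℝ) :
    (vecMulVec u u).trace = ‖WithLp.toLp 2 u‖ ^ 2 := by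
  rw [Matrix.trace_vecMulVec, EuclideanSpace.norm_sq_eq]
  simp [dotProduct, sq]

section L2OpNorm

open scoped Matrix.Norms.L2Operator

variable {m n : Type*} [Fintype m] [Fintype n] [DecidableEq n]

theorem Matrix.l2_opNorm_transpose [DecidableEq m] (A : Matrix m n ℝ) : ‖Aᵀ‖ = ‖A‖ := by
  simpa only [conjTranspose_eq_transpose_of_trivial] using l2_opNorm_conjTranspose A

theorem Matrix.trace_mul_mul_transpose_le (N : Matrix m n ℝ) {W : Matrix n n ℝ}
    (hW : W.PosSemidef) : (N * W * Nᵀ).trace ≤ ‖N‖ ^ 2 * W.trace := by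
  obtain ⟨r, v, rfl⟩ := Matrix.posSemidef_iff_eq_sum_vecMulVec.mp hW
  simp only [star_trivial, Matrix.mul_sum, Matrix.sum_mul, Matrix.trace_sum, Finset.mul_sum]
  refine Finset.sum_le_sum fun i _ => ?_
  rw [Matrix.mul_vecMulVec, Matrix.vecMulVec_mul, Matrix.vecMul_transpose,
    Matrix.trace_vecMulVec_self, Matrix.trace_vecMulVec_self, ← mul_pow]
  gcongr
  exact Matrix.l2_opNorm_mulVec N (WithLp.toLp 2 (v i))

theorem Matrix.trace_add_trace_mul_mul_transpose_le (K : Matrix m n ℝ) (N : Matrix n n ℝ)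
    {W : Matrix n n ℝ} (hW : W.PosSemidef) :
    (N * W * Nᵀ).trace + (K * (N * W * Nᵀ) * Kᵀ).trace ≤ (1 + ‖K‖ ^ 2) * ‖N‖ ^ 2 * W.trace := by
  have hKN : K * (N * W * Nᵀ) * Kᵀ = (K * N) * W * (K * N)ᵀ := by
    simp only [transpose_mul, Matrix.mul_assoc]
  have hKN_le : ‖K * N‖ ^ 2 ≤ ‖K‖ ^ 2 * ‖N‖ ^ 2 := by
    rw [← mul_pow]; gcongr; exact l2_opNorm_mul K N
  rw [hKN]
  have := (K * N).trace_mul_mul_transpose_le hW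
  have := N.trace_mul_mul_transpose_le hW
  nlinarith [hW.trace_nonneg]

variable {M : Matrix n n ℝ} {c ρ : ℝ}

theorem Matrix.summable_pow_mul_mul_transpose_pow (hρ₀ : 0 ≤ ρ) (hρ : ρ < 1)
    (hM : ∀ t, ‖M ^ t‖ ≤ c * ρ ^ t) (W : Matrix n n ℝ) :
    Summable fun t : ℕ => M ^ t * W * Mᵀ ^ t := by
  refine Summable.of_norm_bounded
    ((summable_geometric_of_lt_one (by positivity) (pow_lt_one₀ hρ₀ hρ two_ne_zero)).mul_left
      (c ^ 2 * ‖W‖)) fun t => ?_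
  rw [← transpose_pow]
  calc ‖M ^ t * W * (M ^ t)ᵀ‖ ≤ ‖M ^ t‖ * ‖W‖ * ‖(M ^ t)ᵀ‖ := norm_mul₃_le
    _ = ‖M ^ t‖ ^ 2 * ‖W‖ := by rw [l2_opNorm_transpose]; ring
    _ ≤ (c * ρ ^ t) ^ 2 * ‖W‖ := by gcongr; exact hM t
    _ = c ^ 2 * ‖W‖ * (ρ ^ 2) ^ t := by ring

theorem Matrix.trace_add_trace_mul_mul_transpose_le_of_hasSum (K : Matrix m n ℝ)
    {W X : Matrix n n ℝ} (hW : W.PosSemidef) (hρ₀ : 0 ≤ ρ) (hρ : ρ < 1)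
    (hM : ∀ t, ‖M ^ t‖ ≤ c * ρ ^ t) (hX : HasSum (fun t : ℕ => M ^ t * W * Mᵀ ^ t) X) :
    X.trace + (K * X * Kᵀ).trace ≤ (1 + ‖K‖ ^ 2) * c ^ 2 * W.trace / (1 - ρ ^ 2) := by
  have hgeom := (hasSum_geometric_of_lt_one (sq_nonneg ρ) (pow_lt_one₀ hρ₀ hρ two_ne_zero)).mul_left
    ((1 + ‖K‖ ^ 2) * c ^ 2 * W.trace)
  rw [div_eq_mul_inv]
  refine hasSum_le (fun t => ?_) (hX.matrix_trace.add (hX.matrix_mul_mul_transpose K).matrix_trace)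
    hgeom
  rw [← transpose_pow]
  calc _ ≤ (1 + ‖K‖ ^ 2) * ‖M ^ t‖ ^ 2 * W.trace :=
        trace_add_trace_mul_mul_transpose_le K (M ^ t) hW
    _ ≤ (1 + ‖K‖ ^ 2) * (c * ρ ^ t) ^ 2 * W.trace := by
        have := hM t; gcongr; exact hW.trace_nonneg
    _ = _ := by ring

end L2OpNorm

open scoped Matrix.Norms.L2Operator in
theorem StronglyStable.l2_opNorm_pow_le {d k : ℕ} {A : Matrix (Fin d) (Fin d) ℝ}
    {B : Matrix (Fin d) (Fin k) ℝ} {K : Matrix (Fin k) (Fin d) ℝ} {κ γ : ℝ}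
    (h : StronglyStable A B K κ γ) (t : ℕ) : ‖(A + B * K) ^ t‖ ≤ κ * (1 - γ) ^ t := by
  obtain ⟨hκ, -, hγ1, -, H, L, ⟨u, rfl⟩, hM, hL, hu⟩ := h
  rw [← coe_units_inv] at hM hu
  rw [hM]
  calc _ ≤ ‖(u : Matrix (Fin d) (Fin d) ℝ)‖ * ‖(↑u⁻¹ : Matrix (Fin d) (Fin d) ℝ)‖ * ‖L‖ ^ t :=
        u.norm_conj_pow_le L t
    _ ≤ κ * (1 - γ) ^ t := by gcongr <;> assumption

/-- for a (κ,γ)-strongly stable `K` (κ ≥ 1) and PSD noise covariance `W`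
with `Tr W ≤ λ²`, the series `X = Σ_t M^t W (Mᵀ)^t` converges, solves the steady-state
equation, and `Tr X + Tr(K X Kᵀ) ≤ 2κ⁴λ²/γ`. -/
theorem stmt6 {d k : ℕ} (A : Matrix (Fin d) (Fin d) ℝ) (B : Matrix (Fin d) (Fin k) ℝ)
    (K : Matrix (Fin k) (Fin d) ℝ) (κ γ lam : ℝ) (hκ : 1 ≤ κ)
    (h : StronglyStable A B K κ γ)
    (M : Matrix (Fin d) (Fin d) ℝ) (hM : M = A + B * K)
    (W : Matrix (Fin d) (Fin d) ℝ) (hW : W.PosSemidef) (htrW : W.trace ≤ lam ^ 2) :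
    ∃ X : Matrix (Fin d) (Fin d) ℝ,
      HasSum (fun t : ℕ => M ^ t * W * (Mᵀ) ^ t) X ∧
      X = M * X * Mᵀ + W ∧
      X.trace + (K * X * Kᵀ).trace ≤ 2 * κ ^ 4 * lam ^ 2 / γ := by
  -- `sNorm` is definitionally the norm of the scoped instance `Matrix.Norms.L2Operator`.
  have hMt : ∀ t, sNorm (M ^ t) ≤ κ * (1 - γ) ^ t := hM ▸ h.l2_opNorm_pow_le
  obtain ⟨-, hγ, hγ1, hK, -⟩ := h
  have hρ₀ : 0 ≤ 1 - γ := by linarith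
  have hρ : 1 - γ < 1 := by linarith
  obtain ⟨X, hX⟩ := summable_pow_mul_mul_transpose_pow hρ₀ hρ hMt W
  refine ⟨X, hX, eq_mul_mul_transpose_add_of_hasSum hX, ?_⟩
  calc _ ≤ (1 + sNorm K ^ 2) * κ ^ 2 * W.trace / (1 - (1 - γ) ^ 2) :=
        trace_add_trace_mul_mul_transpose_le_of_hasSum K hW hρ₀ hρ hMt hX
    _ ≤ 2 * κ ^ 4 * lam ^ 2 / γ := by
        have hK2 : sNorm K ^ 2 ≤ κ ^ 2 := pow_le_pow_left₀ (norm_nonneg _) hK 2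
        have hκ2 : 1 ≤ κ ^ 2 := one_le_pow₀ hκ
        apply div_le_div₀ (by positivity) _ hγ (by nlinarith)
        calc (1 + sNorm K ^ 2) * κ ^ 2 * W.trace ≤ (κ ^ 2 + κ ^ 2) * κ ^ 2 * lam ^ 2 := by
              gcongr; exact hW.trace_nonneg
          _ = 2 * κ ^ 4 * lam ^ 2 := by ring
end

section
/- Consider the distributed online gradient descent update on the SDP feasible set S: with all agents initialized at a common Σ_{i,1} = Σ_1 ∈ S and Σ_{i,t+1} = Π_S(Σ_{j=1}^m [P]_{ji} Σ_{j,t} − η L_{i,t}), under the network and cost assumptions below. Then for every agent j and every time t, the consecutive iterates satisfy ‖Σ_{j,t+1} − Σ_{j,t}‖_F ≤ 4√(2m) C η / (1 − β). -/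
open Matrix

/-!
Every iterate is feasible, hence so is each mixed point `∑ j, P j i • Σ_{j,t}` (the feasible set
is convex and `P` is column stochastic). Projecting the gradient step taken from a feasible point
moves it by at most `η ‖L‖_F ≤ √2 C η`, so the iterates follow the gossip step `x ↦ Pᵀ x` up to
errors `ε = 2√2 C η`. Since `P` is doubly stochastic, the network average moves by the averaged
error, and the stacked deviations from the average obey `D_{t+1} ≤ β D_t + √m ε` with `D_1 = 0`;
thus `D_t ≤ √m ε / (1 - β)`. The increment `Σ_{j,t+1} - Σ_{j,t}` is an error, plus a mixed
deviation, minus a deviation, of sizes at most `ε`, `β D_t` and `D_t`.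
-/

lemma sNorm_nonneg {m n : Type*} [Fintype m] [Fintype n] [DecidableEq n] (M : Matrix m n ℝ) :
    0 ≤ sNorm M :=
  norm_nonneg _

lemma le_div_one_sub_of_le_mul_add {u : ℕ → ℝ} {β K : ℝ} (hβ0 : 0 ≤ β) (hβ1 : β < 1)
    (h0 : u 0 ≤ K / (1 - β)) (hstep : ∀ t, u (t + 1) ≤ β * u t + K) (t : ℕ) :
    u t ≤ K / (1 - β) := by
  induction t with
  | zero => exact h0
  | succ t ih =>
    have hβ : 1 - β ≠ 0 := by linarith
    calc u (t + 1) ≤ β * (K / (1 - β)) + K := (hstep t).trans (by gcongr)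
      _ = K / (1 - β) := by field_simp; ring

namespace Consensus

open Finset WithLp
open scoped RealInnerProductSpace

variable {κ E : Type*} [Fintype κ]

section Module

variable [AddCommGroup E] [Module ℝ E]

noncomputable def average (x : κ → E) : E := (Fintype.card κ : ℝ)⁻¹ • ∑ i, x i

noncomputable def deviation (x : κ → E) : κ → E := fun i => x i - average x

def mix (A : Matrix κ κ ℝ) (x : κ → E) : κ → E := fun i => ∑ j, A j i • x j

lemma card_smul_average [Nonempty κ] (x : κ → E) :
    (Fintype.card κ : ℝ) • average x = ∑ i, x i := by
  rw [average, smul_smul, mul_inv_cancel₀ (by simp), one_smul]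

lemma sum_deviation (x : κ → E) : ∑ i, deviation x i = 0 := by
  cases isEmpty_or_nonempty κ
  · simp
  · simp [deviation, sum_sub_distrib, card_smul_average, ← Nat.cast_smul_eq_nsmul ℝ]

lemma deviation_const (c : E) : deviation (fun _ : κ => c) = 0 := by
  funext i
  have : Nonempty κ := ⟨i⟩
  simp [deviation, average, ← Nat.cast_smul_eq_nsmul ℝ]

lemma average_add (x y : κ → E) : average (x + y) = average x + average y := by
  simp [average, sum_add_distrib]

lemma average_mix {A : Matrix κ κ ℝ} (hrow : ∀ j, ∑ i, A j i = 1) (x : κ → E) :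
    average (mix A x) = average x := by
  simp only [average, mix]
  rw [sum_comm]
  simp [← sum_smul, hrow]

lemma mix_sub_average {A : Matrix κ κ ℝ} (hcol : ∀ i, ∑ j, A j i = 1) (x : κ → E) (i : κ) :
    mix A x i - average x =
      mix (A - (Fintype.card κ : ℝ)⁻¹ • Matrix.of fun _ _ => 1) (deviation x) i := by
  have hmix : mix A (deviation x) i = mix A x i - average x := by
    simp only [mix, deviation, smul_sub, sum_sub_distrib, ← sum_smul, hcol, one_smul]
  rw [← hmix]
  simp only [mix, Matrix.sub_apply, Matrix.smul_apply, Matrix.of_apply, smul_eq_mul, mul_one,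
    sub_smul, sum_sub_distrib, ← smul_sum, sum_deviation, smul_zero, sub_zero]

lemma deviation_mix_add {A : Matrix κ κ ℝ} (hrow : ∀ j, ∑ i, A j i = 1)
    (hcol : ∀ i, ∑ j, A j i = 1) (x e : κ → E) :
    deviation (mix A x + e) =
      mix (A - (Fintype.card κ : ℝ)⁻¹ • Matrix.of fun _ _ => 1) (deviation x) + deviation e := by
  funext i
  rw [Pi.add_apply, ← mix_sub_average hcol]
  simp only [deviation, average_add, average_mix hrow, Pi.add_apply]
  abel

end Module

lemma norm_toLp_deviation_le_norm_toLp [NormedAddCommGroup E] [InnerProductSpace ℝ E]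
    (x : κ → E) : ‖toLp 2 (deviation x)‖ ≤ ‖toLp 2 x‖ := by
  have hx : ∀ i, ‖x i‖ ^ 2 =
      ‖deviation x i‖ ^ 2 + 2 * ⟪deviation x i, average x⟫ + ‖average x‖ ^ 2 := fun i => by
    rw [← norm_add_sq_real, deviation, sub_add_cancel]
  have horth : ∑ i, ⟪deviation x i, average x⟫ = 0 := by
    rw [← sum_inner, sum_deviation, inner_zero_left]
  rw [← sq_le_sq₀ (norm_nonneg _) (norm_nonneg _), PiLp.norm_sq_eq_of_L2,
    PiLp.norm_sq_eq_of_L2]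
  simp only [hx, sum_add_distrib, ← mul_sum, horth, mul_zero, add_zero]
  exact le_add_of_nonneg_right (sum_nonneg fun i _ => sq_nonneg _)

lemma norm_toLp_le_sqrt_card_mul [SeminormedAddCommGroup E] {x : κ → E} {ε : ℝ}
    (hε : 0 ≤ ε) (hx : ∀ i, ‖x i‖ ≤ ε) : ‖toLp 2 x‖ ≤ √(Fintype.card κ) * ε := by
  rw [← sq_le_sq₀ (norm_nonneg _) (by positivity), PiLp.norm_sq_eq_of_L2, mul_pow,
    Real.sq_sqrt (Nat.cast_nonneg _), ← nsmul_eq_mul, ← card_univ, ← sum_const]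
  exact sum_le_sum fun i _ => pow_le_pow_left₀ (norm_nonneg _) (hx i) 2

lemma norm_toLp_mulVec_transpose_le {ι : Type*} [Fintype ι] [DecidableEq ι] (A : Matrix ι ι ℝ)
    (v : ι → ℝ) : ‖toLp 2 (Aᵀ *ᵥ v)‖ ≤ sNorm A * ‖toLp 2 v‖ := by
  open scoped Matrix.Norms.L2Operator in
  calc ‖toLp 2 (Aᵀ *ᵥ v)‖ ≤ ‖Aᵀ‖ * ‖toLp 2 v‖ := Aᵀ.l2_opNorm_mulVec (toLp 2 v)
    _ = sNorm A * ‖toLp 2 v‖ := by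
      rw [← Matrix.conjTranspose_eq_transpose_of_trivial, Matrix.l2_opNorm_conjTranspose]; rfl

lemma norm_toLp_mix_le {ι : Type*} [Fintype ι] [DecidableEq κ] (A : Matrix κ κ ℝ)
    (x : κ → EuclideanSpace ℝ ι) : ‖toLp 2 (mix A x)‖ ≤ sNorm A * ‖toLp 2 x‖ := by
  have hcoord : ∀ i p, mix A x i p = (Aᵀ *ᵥ fun j => x j p) i := fun i p => by
    simp [mix, Matrix.mulVec, dotProduct]
  rw [← sq_le_sq₀ (norm_nonneg _) (mul_nonneg (sNorm_nonneg A) (norm_nonneg _)), mul_pow,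
    PiLp.norm_sq_eq_of_L2, PiLp.norm_sq_eq_of_L2]
  calc ∑ i, ‖mix A x i‖ ^ 2 = ∑ p, ‖toLp 2 (Aᵀ *ᵥ fun j => x j p)‖ ^ 2 := by
        simp only [EuclideanSpace.real_norm_sq_eq, hcoord]
        exact sum_comm
    _ ≤ ∑ p, (sNorm A * ‖toLp 2 fun j => x j p‖) ^ 2 := sum_le_sum fun p _ =>
        pow_le_pow_left₀ (norm_nonneg _) (norm_toLp_mulVec_transpose_le A _) 2
    _ = sNorm A ^ 2 * ∑ j, ‖x j‖ ^ 2 := by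
        simp only [mul_pow, ← mul_sum, EuclideanSpace.real_norm_sq_eq]
        rw [sum_comm]

section Perturbed

variable {ι : Type*} [Fintype ι] [DecidableEq κ] {A : Matrix κ κ ℝ} {β ε : ℝ}
  {x : ℕ → κ → EuclideanSpace ℝ ι}

theorem norm_toLp_deviation_le_of_perturbed (hrow : ∀ j, ∑ i, A j i = 1)
    (hcol : ∀ i, ∑ j, A j i = 1)
    (hspec : sNorm (A - (Fintype.card κ : ℝ)⁻¹ • Matrix.of fun _ _ => 1) ≤ β) (hβ1 : β < 1)
    (hε : 0 ≤ ε) {c : EuclideanSpace ℝ ι} (hx0 : ∀ i, x 0 i = c)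
    (hx : ∀ t i, ‖x (t + 1) i - mix A (x t) i‖ ≤ ε) (t : ℕ) :
    ‖toLp 2 (deviation (x t))‖ ≤ √(Fintype.card κ) * ε / (1 - β) := by
  have hβ0 : 0 ≤ β := (sNorm_nonneg _).trans hspec
  refine le_div_one_sub_of_le_mul_add (u := fun t => ‖toLp 2 (deviation (x t))‖) hβ0 hβ1 ?_
    (fun t => ?_) t
  · rw [show x 0 = fun _ => c from funext hx0, deviation_const]
    simp only [toLp_zero, norm_zero]
    have : 0 < 1 - β := by linarith
    positivity
  · set e := fun i => x (t + 1) i - mix A (x t) i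
    have hsplit : x (t + 1) = mix A (x t) + e := by funext i; simp [e]
    rw [hsplit, deviation_mix_add hrow hcol, toLp_add]
    refine (norm_add_le _ _).trans (add_le_add ?_ ?_)
    · exact (norm_toLp_mix_le _ _).trans (by gcongr)
    · exact (norm_toLp_deviation_le_norm_toLp _).trans (norm_toLp_le_sqrt_card_mul hε (hx t))

theorem norm_succ_sub_le_of_perturbed (hrow : ∀ j, ∑ i, A j i = 1)
    (hcol : ∀ i, ∑ j, A j i = 1)
    (hspec : sNorm (A - (Fintype.card κ : ℝ)⁻¹ • Matrix.of fun _ _ => 1) ≤ β) (hβ1 : β < 1)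
    (hε : 0 ≤ ε) {c : EuclideanSpace ℝ ι} (hx0 : ∀ i, x 0 i = c)
    (hx : ∀ t i, ‖x (t + 1) i - mix A (x t) i‖ ≤ ε) (t : ℕ) (i : κ) :
    ‖x (t + 1) i - x t i‖ ≤ 2 * √(Fintype.card κ) * ε / (1 - β) := by
  have hβ0 : 0 ≤ β := (sNorm_nonneg _).trans hspec
  have hβ : 0 < 1 - β := by linarith
  set K := √(Fintype.card κ) * ε
  have hdev := norm_toLp_deviation_le_of_perturbed hrow hcol hspec hβ1 hε hx0 hx t
  have hεK : ε ≤ K := by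
    have hcard : (1 : ℝ) ≤ Fintype.card κ := by exact_mod_cast Fintype.card_pos_iff.mpr ⟨i⟩
    exact le_mul_of_one_le_left hε (Real.one_le_sqrt.mpr hcard)
  have hmix : ‖mix A (x t) i - average (x t)‖ ≤ β * (K / (1 - β)) := by
    rw [mix_sub_average hcol]
    calc _ ≤ ‖toLp 2 (mix _ (deviation (x t)))‖ := PiLp.norm_apply_le (toLp 2 _) i
      _ ≤ _ := (norm_toLp_mix_le _ _).trans (by gcongr)
  have hself : ‖deviation (x t) i‖ ≤ K / (1 - β) :=
    (PiLp.norm_apply_le (toLp 2 _) i).trans hdev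
  have hsplit : x (t + 1) i - x t i =
      (x (t + 1) i - mix A (x t) i) + (mix A (x t) i - average (x t)) - deviation (x t) i := by
    simp only [deviation]
    abel
  calc ‖x (t + 1) i - x t i‖ ≤ K + β * (K / (1 - β)) + K / (1 - β) := by
        rw [hsplit]
        exact norm_sub_le_of_le (norm_add_le_of_le ((hx t i).trans hεK) hmix) hself
    _ = 2 * √(Fintype.card κ) * ε / (1 - β) := by
        field_simp
        ring

end Perturbed

end Consensus

section MatrixNorms

open Finset

def Matrix.toEuclideanProd {a b : Type*} : Matrix a b ℝ →ₗ[ℝ] EuclideanSpace ℝ (a × b) where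
  toFun M := WithLp.toLp 2 fun p => M p.1 p.2
  map_add' _ _ := rfl
  map_smul' _ _ := rfl

@[simp]
lemma Matrix.toEuclideanProd_apply {a b : Type*} (M : Matrix a b ℝ) (p : a × b) :
    Matrix.toEuclideanProd M p = M p.1 p.2 :=
  rfl

variable {a b : Type*} [Fintype a] [Fintype b]

lemma trace_transpose_mul_self (M : Matrix a b ℝ) :
    (Mᵀ * M).trace = ∑ i, ∑ j, M i j ^ 2 := by
  simp only [Matrix.trace, Matrix.diag, Matrix.mul_apply, Matrix.transpose_apply, sq]
  exact sum_comm

lemma fNorm_nonneg (M : Matrix a b ℝ) : 0 ≤ fNorm M := Real.sqrt_nonneg _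

lemma fNorm_sq (M : Matrix a b ℝ) : fNorm M ^ 2 = (Mᵀ * M).trace := by
  rw [fNorm, Real.sq_sqrt (by rw [trace_transpose_mul_self]; positivity)]

lemma fNorm_eq_norm_toEuclideanProd (M : Matrix a b ℝ) :
    fNorm M = ‖Matrix.toEuclideanProd M‖ := by
  rw [← sq_eq_sq₀ (fNorm_nonneg M) (norm_nonneg _), fNorm_sq, trace_transpose_mul_self,
    EuclideanSpace.real_norm_sq_eq]
  simp [Fintype.sum_prod_type]

lemma fNorm_smul (c : ℝ) (M : Matrix a b ℝ) : fNorm (c • M) = |c| * fNorm M := by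
  simp only [fNorm_eq_norm_toEuclideanProd, map_smul, norm_smul, Real.norm_eq_abs]

lemma fNorm_proj_sub_le {S : Matrix a b ℝ → Prop} {proj : Matrix a b ℝ → Matrix a b ℝ}
    (hmin : ∀ M Sg, S Sg → fNorm (M - proj M) ≤ fNorm (M - Sg)) {y : Matrix a b ℝ} (hy : S y)
    (g : Matrix a b ℝ) : fNorm (proj (y - g) - y) ≤ 2 * fNorm g := by
  have h := hmin (y - g) y hy
  simp only [fNorm_eq_norm_toEuclideanProd, map_sub, sub_sub_cancel_left, map_neg,
    norm_neg] at h ⊢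
  set P := Matrix.toEuclideanProd (proj (y - g))
  set Y := Matrix.toEuclideanProd y
  set G := Matrix.toEuclideanProd g
  calc ‖P - Y‖ = ‖(P - (Y - G)) - G‖ := by congr 1; abel
    _ ≤ ‖Y - G - P‖ + ‖G‖ := by rw [norm_sub_rev (Y - G) P]; exact norm_sub_le _ _
    _ ≤ 2 * ‖G‖ := by linarith

lemma Matrix.PosSemidef.exists_eq_transpose_mul_self {M : Matrix a a ℝ} (hM : M.PosSemidef) :
    ∃ B : Matrix a a ℝ, M = Bᵀ * B := by
  classical
  simp_rw [← Matrix.conjTranspose_eq_transpose_of_trivial, ← Matrix.star_eq_conjTranspose]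
  open scoped MatrixOrder in exact CStarAlgebra.nonneg_iff_eq_star_mul_self.mp hM.nonneg

section Frobenius

attribute [local instance] Matrix.frobeniusSeminormedAddCommGroup

lemma fNorm_eq_frobenius_norm (M : Matrix a b ℝ) : fNorm M = ‖M‖ := by
  rw [← sq_eq_sq₀ (fNorm_nonneg M) (norm_nonneg _), fNorm_sq, trace_transpose_mul_self]
  change _ = ‖WithLp.toLp 2 fun i => WithLp.toLp 2 (M i)‖ ^ 2
  rw [PiLp.norm_sq_eq_of_L2]
  simp only [EuclideanSpace.real_norm_sq_eq]

lemma fNorm_le_trace_of_posSemidef {M : Matrix a a ℝ} (hM : M.PosSemidef) :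
    fNorm M ≤ M.trace := by
  obtain ⟨B, rfl⟩ := hM.exists_eq_transpose_mul_self
  rw [← fNorm_sq, fNorm_eq_frobenius_norm, fNorm_eq_frobenius_norm, sq]
  exact (Matrix.frobenius_norm_mul Bᵀ B).trans_eq (by rw [Matrix.frobenius_norm_transpose])

end Frobenius

end MatrixNorms

section Blocks

variable {l m n o : Type*} [Fintype l] [Fintype m] [Fintype n] [Fintype o]

lemma fNorm_fromBlocks_zero_zero_sq (Q : Matrix n l ℝ) (R : Matrix o m ℝ) :
    fNorm (Matrix.fromBlocks Q 0 0 R) ^ 2 = fNorm Q ^ 2 + fNorm R ^ 2 := by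
  simp [fNorm_sq, trace_transpose_mul_self, Fintype.sum_sum_type]

lemma fNorm_fromBlocks_zero_zero_le {Q : Matrix n l ℝ} {R : Matrix o m ℝ} {C : ℝ}
    (hQ : fNorm Q ≤ C) (hR : fNorm R ≤ C) : fNorm (Matrix.fromBlocks Q 0 0 R) ≤ √2 * C := by
  have hC : 0 ≤ C := (fNorm_nonneg Q).trans hQ
  rw [← sq_le_sq₀ (fNorm_nonneg _) (by positivity), mul_pow, Real.sq_sqrt zero_le_two,
    fNorm_fromBlocks_zero_zero_sq]
  nlinarith [pow_le_pow_left₀ (fNorm_nonneg Q) hQ 2, pow_le_pow_left₀ (fNorm_nonneg R) hR 2]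

end Blocks

lemma convex_feasible {d k : ℕ} (A : Matrix (Fin d) (Fin d) ℝ) (B : Matrix (Fin d) (Fin k) ℝ)
    (W : Matrix (Fin d) (Fin d) ℝ) (ν : ℝ) : Convex ℝ {Sg | Feasible A B W ν Sg} := by
  rintro X ⟨hXpsd, hXtr, hXeq⟩ Y ⟨hYpsd, hYtr, hYeq⟩ a b ha hb hab
  refine ⟨(hXpsd.smul ha).add (hYpsd.smul hb), ?_, ?_⟩
  · rw [Matrix.trace_add, Matrix.trace_smul, Matrix.trace_smul, smul_eq_mul, smul_eq_mul]
    linear_combination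
      mul_le_mul_of_nonneg_left hXtr ha + mul_le_mul_of_nonneg_left hYtr hb + ν * hab
  · have hblk : (a • X + b • Y).toBlocks₁₁ = a • X.toBlocks₁₁ + b • Y.toBlocks₁₁ := by
      ext; simp [Matrix.toBlocks₁₁]
    rw [hblk, hXeq, hYeq, Matrix.mul_add, Matrix.add_mul, Matrix.mul_smul, Matrix.mul_smul,
      Matrix.smul_mul, Matrix.smul_mul]
    linear_combination (norm := module) hab • W

theorem stmt15_general {m d k : ℕ}
    (A : Matrix (Fin d) (Fin d) ℝ) (B : Matrix (Fin d) (Fin k) ℝ)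
    (W : Matrix (Fin d) (Fin d) ℝ) (ν C η β : ℝ)
    (hη : 0 < η) (hC : 0 ≤ C) (hβ1 : β < 1)
    (P : Matrix (Fin m) (Fin m) ℝ)
    (hpos : ∀ i j, 0 ≤ P i j)
    (hrow : ∀ i, ∑ j, P i j = 1) (hcol : ∀ j, ∑ i, P i j = 1)
    (hspec : sNorm (P - (m : ℝ)⁻¹ • Matrix.of (fun _ _ => (1 : ℝ))) ≤ β)
    (Q : Fin m → ℕ → Matrix (Fin d) (Fin d) ℝ)
    (R : Fin m → ℕ → Matrix (Fin k) (Fin k) ℝ)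
    (hQ : ∀ i t, (Q i t).PosSemidef) (hR : ∀ i t, (R i t).PosSemidef)
    (htrQ : ∀ i t, (Q i t).trace ≤ C) (htrR : ∀ i t, (R i t).trace ≤ C)
    (L : Fin m → ℕ → Matrix (Fin d ⊕ Fin k) (Fin d ⊕ Fin k) ℝ)
    (hL : ∀ i t, L i t = fromBlocks (Q i t) 0 0 (R i t))
    (proj : Matrix (Fin d ⊕ Fin k) (Fin d ⊕ Fin k) ℝ →
      Matrix (Fin d ⊕ Fin k) (Fin d ⊕ Fin k) ℝ)
    (hprojmem : ∀ M, Feasible A B W ν (proj M))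
    (hprojmin : ∀ M Sg, Feasible A B W ν Sg → fNorm (M - proj M) ≤ fNorm (M - Sg))
    (Sg1 : Matrix (Fin d ⊕ Fin k) (Fin d ⊕ Fin k) ℝ) (hSg1 : Feasible A B W ν Sg1)
    (It : Fin m → ℕ → Matrix (Fin d ⊕ Fin k) (Fin d ⊕ Fin k) ℝ)
    (hinit : ∀ i, It i 1 = Sg1)
    (hrec : ∀ i t, 1 ≤ t →
      It i (t + 1) = proj ((∑ j, P j i • It j t) - η • L i t))
    (j : Fin m) (t : ℕ) (ht : 1 ≤ t) :
    fNorm (It j (t + 1) - It j t) ≤ 4 * Real.sqrt (2 * m) * C * η / (1 - β) := by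
  obtain ⟨t, rfl⟩ : ∃ s, t = s + 1 := ⟨t - 1, by omega⟩
  have hfeas : ∀ i s, Feasible A B W ν (It i (s + 1)) := by
    rintro i (_ | s)
    · simpa [hinit] using hSg1
    · rw [hrec i (s + 1) (by omega)]
      exact hprojmem _
  have hcost : ∀ i s, fNorm (η • L i s) ≤ η * (√2 * C) := fun i s => by
    rw [fNorm_smul, abs_of_pos hη, hL]
    gcongr
    exact fNorm_fromBlocks_zero_zero_le
      ((fNorm_le_trace_of_posSemidef (hQ i s)).trans (htrQ i s))
      ((fNorm_le_trace_of_posSemidef (hR i s)).trans (htrR i s))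
  have hpert : ∀ s i, fNorm (It i (s + 1 + 1) - ∑ j, P j i • It j (s + 1)) ≤
      2 * (η * (√2 * C)) := by
    intro s i
    have hmix := (convex_feasible A B W ν).sum_mem (fun j _ => hpos j i) (hcol i)
      (fun j _ => hfeas j s)
    rw [hrec i (s + 1) (by omega)]
    exact (fNorm_proj_sub_le hprojmin hmix _).trans (by gcongr; exact hcost i (s + 1))
  have key := Consensus.norm_succ_sub_le_of_perturbed
    (x := fun s i => Matrix.toEuclideanProd (It i (s + 1))) (ε := 2 * (η * (√2 * C)))
    (c := Matrix.toEuclideanProd Sg1) hrow hcol (by simpa using hspec) hβ1 (by positivity)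
    (fun i => by simp [hinit])
    (fun s i => by
      simpa [Consensus.mix, map_sum, map_smul, fNorm_eq_norm_toEuclideanProd] using hpert s i)
    t j
  rw [fNorm_eq_norm_toEuclideanProd, map_sub]
  refine key.trans_eq ?_
  rw [Fintype.card_fin, Real.sqrt_mul zero_le_two]
  ring

/-- consecutive iterates of distributed online gradient descent on the SDP
feasible set move at most `4√(2m) C η / (1 - β)` in Frobenius norm. -/
theorem stmt15 {m d k : ℕ}
    (A : Matrix (Fin d) (Fin d) ℝ) (B : Matrix (Fin d) (Fin k) ℝ)
    (W : Matrix (Fin d) (Fin d) ℝ) (ν C η β : ℝ)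
    (hν : 0 < ν) (hη : 0 < η) (hC : 0 ≤ C) (hβ0 : 0 ≤ β) (hβ1 : β < 1)
    (P : Matrix (Fin m) (Fin m) ℝ)
    (hpos : ∀ i j, 0 ≤ P i j)
    (hrow : ∀ i, ∑ j, P i j = 1) (hcol : ∀ j, ∑ i, P i j = 1)
    (hspec : sNorm (P - (m : ℝ)⁻¹ • Matrix.of (fun _ _ => (1 : ℝ))) ≤ β)
    (Q : Fin m → ℕ → Matrix (Fin d) (Fin d) ℝ)
    (R : Fin m → ℕ → Matrix (Fin k) (Fin k) ℝ)
    (hQ : ∀ i t, (Q i t).PosSemidef) (hR : ∀ i t, (R i t).PosSemidef)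
    (htrQ : ∀ i t, (Q i t).trace ≤ C) (htrR : ∀ i t, (R i t).trace ≤ C)
    (L : Fin m → ℕ → Matrix (Fin d ⊕ Fin k) (Fin d ⊕ Fin k) ℝ)
    (hL : ∀ i t, L i t = fromBlocks (Q i t) 0 0 (R i t))
    (proj : Matrix (Fin d ⊕ Fin k) (Fin d ⊕ Fin k) ℝ →
      Matrix (Fin d ⊕ Fin k) (Fin d ⊕ Fin k) ℝ)
    (hprojmem : ∀ M, Feasible A B W ν (proj M))
    (hprojmin : ∀ M Sg, Feasible A B W ν Sg → fNorm (M - proj M) ≤ fNorm (M - Sg))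
    (Sg1 : Matrix (Fin d ⊕ Fin k) (Fin d ⊕ Fin k) ℝ) (hSg1 : Feasible A B W ν Sg1)
    (It : Fin m → ℕ → Matrix (Fin d ⊕ Fin k) (Fin d ⊕ Fin k) ℝ)
    (hinit : ∀ i, It i 1 = Sg1)
    (hrec : ∀ i t, 1 ≤ t →
      It i (t + 1) = proj ((∑ j, P j i • It j t) - η • L i t))
    (j : Fin m) (t : ℕ) (ht : 1 ≤ t) :
    fNorm (It j (t + 1) - It j t) ≤ 4 * Real.sqrt (2 * m) * C * η / (1 - β) :=
  stmt15_general A B W ν C η β hη hC hβ1 P hpos hrow hcol hspec Q R hQ hR htrQ htrR L hL proj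
    hprojmem hprojmin Sg1 hSg1 It hinit hrec j t ht
end
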